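/- For every α ∈ (0,1), every constant L > 0, every r ≥ 1, every n ≥ 2, every ε ∈ (0,1), every measurable estimator θ̂_r : ℕ^n → ℝ, and every measurable h : ℝ → ℝ, one has sup over P ∈ Σ(α,L) of P_P( ℓ(θ̂_r(X_n), θ_r(P;X_n)) ≥ ε ) = 1, where Σ(α,L) is the class of probability mass functions P on ℕ with lim_{x→0} x^α F̄_P(x) = L. In particular, the minimax risk over the regularly varying class Σ(α,L) equals the minimax risk over all discrete distributions. -/

import Mathlib

/-!
The class `Σ(α, L)` constrains only the tail of `P`, so it contains distributions `P_m` that put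
mass `1 - τ_m → 1` on the symbol `0` and spread `τ_m > 0` over the symbols `k + 1` with masses
`((k + M_m) / L) ^ (-1/α)`, whose tail function stays within `M_m + 1` of `L x^(-α)`.
With probability `(1 - τ_m)^n → 1` the sample is constant `0`: there the estimator returns the
same value for every `m`, while the missing mass lies in `(0, τ_m]` and tends to `0`, so the
relative error is eventually at least `1 > ε`.
-/

open MeasureTheory ProbabilityTheory Real Filter

noncomputable section

/-- The law of an i.i.d. sample of size `n` from the discrete distribution `P` on `ℕ`. -/
def sampleMeasure (P : PMF ℕ) (n : ℕ) : Measure (Fin n → ℕ) :=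
  Measure.pi fun _ => P.toMeasure

/-- The probability mass of symbol `j` under `P`, as a real number. -/
def pReal (P : PMF ℕ) (j : ℕ) : ℝ := (P j).toReal

/-- Empirical frequency of the symbol `j` in the sample `ω`. -/
def freq {n : ℕ} (ω : Fin n → ℕ) (j : ℕ) : ℕ :=
  (Finset.univ.filter fun i => ω i = j).card

/-- The `r`-order missing mass `θ_r(P; X_n)`. -/
def missingMass (p : ℕ → ℝ) (r : ℕ) {n : ℕ} (ω : Fin n → ℕ) : ℝ :=
  ∑' j, p j ^ r * (if freq ω j = 0 then 1 else 0)

/-- `M_{n,r}`: the number of distinct symbols appearing exactly `r` times in the sample. -/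
def Mcount {n : ℕ} (ω : Fin n → ℕ) (r : ℕ) : ℝ :=
  ∑' j, if freq ω j = r then 1 else 0

/-- The Good–Turing-type estimator `θ̂_r^{GT}(X_n) = M_{n,r} / (n choose r)`. -/
def gtEst {n : ℕ} (ω : Fin n → ℕ) (r : ℕ) : ℝ := Mcount ω r / (n.choose r)

/-- The multiplicative (relative) loss: `ℓ(t, θ) = |t/θ - 1|` if `θ > 0`, and `h t` otherwise. -/
def mloss (h : ℝ → ℝ) (t θ : ℝ) : ℝ := if 0 < θ then |t / θ - 1| else h t

/-- The tail function `F̄_P(x) = #{j : p_j > x}`. -/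
def tailF (P : PMF ℕ) (x : ℝ) : ℕ := Set.ncard {j | x < pReal P j}

open scoped Topology

instance (P : PMF ℕ) (n : ℕ) : IsProbabilityMeasure (sampleMeasure P n) := by
  unfold sampleMeasure; infer_instance

lemma sampleMeasure_const (P : PMF ℕ) (n a : ℕ) :
    sampleMeasure P n {fun _ => a} = P a ^ n := by
  simp [sampleMeasure, PMF.toMeasure_apply_singleton]

lemma freq_const {n : ℕ} (a j : ℕ) :
    freq (fun _ : Fin n => a) j = if j = a then n else 0 := by
  by_cases hj : j = a
  · simp [freq, hj]
  · simp [freq, hj, Ne.symm hj]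

section PMFReal

variable (P : PMF ℕ)

lemma pReal_nonneg (j : ℕ) : 0 ≤ pReal P j := ENNReal.toReal_nonneg

lemma pReal_le_one (j : ℕ) : pReal P j ≤ 1 :=
  ENNReal.toReal_le_of_le_ofReal zero_le_one (by simpa using P.coe_le_one j)

lemma hasSum_pReal : HasSum (pReal P) 1 := by
  have hs := ENNReal.summable_toReal P.tsum_coe_ne_top
  rw [show (1 : ℝ) = ∑' j, pReal P j by
    simp [pReal, ← ENNReal.tsum_toReal_eq P.apply_ne_top, P.tsum_coe]]
  exact hs.hasSum

lemma summable_pReal_pow {r : ℕ} (hr : 1 ≤ r) : Summable fun j => pReal P j ^ r :=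
  (hasSum_pReal P).summable.of_nonneg_of_le (fun j => pow_nonneg (pReal_nonneg P j) r)
    fun j => pow_le_of_le_one (pReal_nonneg P j) (pReal_le_one P j) (by omega)

lemma tsum_pReal_succ : ∑' k, pReal P (k + 1) = 1 - pReal P 0 := by
  rw [← (hasSum_pReal P).tsum_eq, (hasSum_pReal P).summable.tsum_eq_zero_add, add_sub_cancel_left]

end PMFReal

def ofTailMass (g : ℕ → ℝ) : ℕ → ℝ
  | 0 => 1 - ∑' k, g k
  | k + 1 => g k

lemma hasSum_ofTailMass {g : ℕ → ℝ} (hg : Summable g) : HasSum (ofTailMass g) 1 :=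
  (hasSum_nat_add_iff' 1).1 (by simpa [ofTailMass] using hg.hasSum)

lemma ofTailMass_nonneg {g : ℕ → ℝ} (hg0 : ∀ k, 0 ≤ g k) (hg1 : ∑' k, g k ≤ 1) :
    ∀ j, 0 ≤ ofTailMass g j
  | 0 => sub_nonneg.2 hg1
  | k + 1 => hg0 k

def PMF.ofTail (g : ℕ → ℝ) (hg0 : ∀ k, 0 ≤ g k) (hg : Summable g) (hg1 : ∑' k, g k ≤ 1) :
    PMF ℕ :=
  ⟨fun j => ENNReal.ofReal (ofTailMass g j), by
    rw [← ENNReal.ofReal_one, ← (hasSum_ofTailMass hg).tsum_eq,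
      ENNReal.ofReal_tsum_of_nonneg (ofTailMass_nonneg hg0 hg1) (hasSum_ofTailMass hg).summable]
    exact ENNReal.summable.hasSum⟩

lemma pReal_ofTail {g : ℕ → ℝ} (hg0 : ∀ k, 0 ≤ g k) (hg : Summable g) (hg1 : ∑' k, g k ≤ 1)
    (j : ℕ) : pReal (PMF.ofTail g hg0 hg hg1) j = ofTailMass g j :=
  ENNReal.toReal_ofReal (ofTailMass_nonneg hg0 hg1 j)

lemma missingMass_const_zero (P : PMF ℕ) {r n : ℕ} (hr : 1 ≤ r) (hn : n ≠ 0) :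
    missingMass (pReal P) r (fun _ : Fin n => 0) = ∑' k, pReal P (k + 1) ^ r := by
  simp only [missingMass, freq_const, ite_eq_right_iff, hn, imp_false]
  rw [tsum_eq_zero_add' (by simpa using (summable_nat_add_iff 1).2 (summable_pReal_pow P hr))]
  simp

lemma missingMass_const_zero_pos (P : PMF ℕ) {r n : ℕ} (hr : 1 ≤ r) (hn : n ≠ 0) (hP : P 0 < 1) :
    0 < missingMass (pReal P) r (fun _ : Fin n => 0) := by
  rw [missingMass_const_zero P hr hn]
  obtain ⟨k, hk⟩ : ∃ k, 0 < pReal P (k + 1) := by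
    by_contra! hzero
    have h0 : ∑' k, pReal P (k + 1) = 0 :=
      (tsum_congr fun k => le_antisymm (hzero k) (pReal_nonneg P _)).trans tsum_zero
    rw [tsum_pReal_succ, sub_eq_zero, eq_comm, pReal, ENNReal.toReal_eq_one_iff] at h0
    exact hP.ne h0
  exact ((summable_nat_add_iff 1).2 (summable_pReal_pow P hr)).tsum_pos
    (fun j => pow_nonneg (pReal_nonneg P _) r) k (pow_pos hk r)

lemma missingMass_const_zero_le (P : PMF ℕ) {r n : ℕ} (hr : 1 ≤ r) (hn : n ≠ 0) :
    missingMass (pReal P) r (fun _ : Fin n => 0) ≤ 1 - pReal P 0 := by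
  rw [missingMass_const_zero P hr hn, ← tsum_pReal_succ P]
  exact ((summable_nat_add_iff 1).2 (summable_pReal_pow P hr)).tsum_le_tsum
    (fun k => pow_le_of_le_one (pReal_nonneg P _) (pReal_le_one P _) (by omega))
    ((summable_nat_add_iff 1).2 (hasSum_pReal P).summable)

lemma eventually_one_le_mloss (h : ℝ → ℝ) (t : ℝ) : ∀ᶠ θ in 𝓝[>] 0, 1 ≤ mloss h t θ := by
  rcases le_or_gt t 0 with ht | ht
  · filter_upwards [self_mem_nhdsWithin] with θ (hθ : 0 < θ)
    have : t / θ ≤ 0 := div_nonpos_of_nonpos_of_nonneg ht hθ.le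
    rw [mloss, if_pos hθ, le_abs]
    right; linarith
  · filter_upwards [Ioo_mem_nhdsGT (half_pos ht)] with θ ⟨hθ, hθt⟩
    have : 2 < t / θ := by rw [lt_div_iff₀ hθ]; linarith
    rw [mloss, if_pos hθ, le_abs]
    left; linarith

theorem iSup_sampleMeasure_mloss_ge_eq_one {S : PMF ℕ → Prop} {r n : ℕ} (hr : 1 ≤ r)
    (hn : n ≠ 0) {ε : ℝ} (hε : ε ≤ 1) (est : (Fin n → ℕ) → ℝ) (h : ℝ → ℝ) (P : ℕ → PMF ℕ)
    (hS : ∀ m, S (P m)) (hP : Tendsto (fun m => P m 0) atTop (𝓝 1)) (hP1 : ∀ m, P m 0 < 1) :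
    ⨆ (Q : PMF ℕ) (_ : S Q),
      sampleMeasure Q n {ω | mloss h (est ω) (missingMass (pReal Q) r ω) ≥ ε} = 1 := by
  have hpow : Tendsto (fun m => P m 0 ^ n) atTop (𝓝 1) := by
    simpa using ENNReal.Tendsto.pow (n := n) hP
  refine le_antisymm (iSup₂_le fun Q _ => prob_le_one) (le_of_tendsto hpow ?_)
  have hθ : Tendsto (fun m => missingMass (pReal (P m)) r (fun _ : Fin n => 0)) atTop (𝓝[>] 0) := by
    have hgap : Tendsto (fun m => 1 - pReal (P m) 0) atTop (𝓝 0) := by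
      simpa [pReal] using ((ENNReal.tendsto_toReal ENNReal.one_ne_top).comp hP).const_sub 1
    refine tendsto_nhdsWithin_iff.2 ⟨squeeze_zero (fun m => ?_) (fun m => ?_) hgap, ?_⟩
    · exact (missingMass_const_zero_pos (P m) hr hn (hP1 m)).le
    · exact missingMass_const_zero_le (P m) hr hn
    · exact Eventually.of_forall fun m => missingMass_const_zero_pos (P m) hr hn (hP1 m)
  filter_upwards [hθ.eventually (eventually_one_le_mloss h (est fun _ => 0))] with m hm
  refine le_iSup₂_of_le (P m) (hS m) ?_
  rw [← sampleMeasure_const]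
  refine measure_mono fun ω hω => ?_
  rw [Set.mem_singleton_iff.1 hω]
  exact hε.trans hm

lemma tendsto_rpow_mul_of_abs_sub_rpow_neg_le {α L C : ℝ} (hα : 0 < α) {F : ℝ → ℝ}
    (hF : ∀ᶠ x in 𝓝[>] 0, |F x - L * x ^ (-α)| ≤ C) :
    Tendsto (fun x => x ^ α * F x) (𝓝[>] 0) (𝓝 L) := by
  have hpow : Tendsto (fun x : ℝ => x ^ α) (𝓝[>] 0) (𝓝 0) := by
    simpa [Real.zero_rpow hα.ne'] using
      ((Real.continuousAt_rpow_const 0 α (Or.inr hα.le)).tendsto).mono_left nhdsWithin_le_nhds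
  have hsmall : Tendsto (fun x => x ^ α * (F x - L * x ^ (-α))) (𝓝[>] 0) (𝓝 0) := by
    refine squeeze_zero_norm' ?_ (by simpa using hpow.mul_const C)
    filter_upwards [hF, self_mem_nhdsWithin] with x hx (hx0 : 0 < x)
    rw [norm_mul, Real.norm_of_nonneg (Real.rpow_nonneg hx0.le α)]
    exact mul_le_mul_of_nonneg_left hx (Real.rpow_nonneg hx0.le α)
  refine (by simpa using hsmall.const_add L : Tendsto _ _ (𝓝 L)).congr' ?_
  filter_upwards [self_mem_nhdsWithin] with x (hx0 : 0 < x)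
  rw [mul_sub, Real.rpow_neg hx0.le, mul_left_comm,
    mul_inv_cancel₀ (Real.rpow_pos_of_pos hx0 α).ne']
  ring

def regVarProfile (α L u : ℝ) : ℝ := (u / L) ^ (-α)⁻¹

section RegVarProfile

variable {α L : ℝ}

lemma regVarProfile_pos (hL : 0 < L) {u : ℝ} (hu : 0 < u) : 0 < regVarProfile α L u :=
  Real.rpow_pos_of_pos (div_pos hu hL) _

lemma lt_regVarProfile_iff (hα : 0 < α) (hL : 0 < L) {x u : ℝ} (hx : 0 < x) (hu : 0 < u) :
    x < regVarProfile α L u ↔ u < L * x ^ (-α) := by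
  rw [regVarProfile, Real.lt_rpow_inv_iff_of_neg hx (div_pos hu hL) (neg_lt_zero.2 hα),
    div_lt_iff₀' hL]

lemma summable_regVarProfile (hα0 : 0 < α) (hα1 : α < 1) (hL : 0 ≤ L) :
    Summable fun k : ℕ => regVarProfile α L k := by
  have hexp : (-α)⁻¹ < -1 := by
    rw [inv_neg, neg_lt_neg_iff]; exact (one_lt_inv₀ hα0).2 hα1
  simpa [regVarProfile, Real.div_rpow (Nat.cast_nonneg _) hL] using
    (Real.summable_nat_rpow.2 hexp).div_const (L ^ (-α)⁻¹)

end RegVarProfile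

section RegVarTail

variable {α L : ℝ} {P : PMF ℕ} {M : ℕ}

lemma tailF_eq_ceil_add_one (hα : 0 < α) (hL : 0 < L) (hM : 0 < M)
    (hP : ∀ k, pReal P (k + 1) = regVarProfile α L (k + M : ℕ)) {x : ℝ} (hx : 0 < x)
    (hx0 : x < pReal P 0) : tailF P x = ⌈L * x ^ (-α) - M⌉₊ + 1 := by
  have hset : {j | x < pReal P j} = Set.Iio (⌈L * x ^ (-α) - M⌉₊ + 1) := by
    ext (_ | k)
    · simpa using hx0
    · rw [Set.mem_ofPred_eq, hP, lt_regVarProfile_iff hα hL hx (by positivity), Set.mem_Iio,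
        Nat.add_lt_add_iff_right, Nat.lt_ceil]
      push_cast
      constructor <;> intro h <;> linarith
  rw [tailF, hset, Set.ncard_Iio_nat]

lemma tendsto_rpow_mul_tailF (hα : 0 < α) (hL : 0 < L) (hM : 0 < M)
    (hP : ∀ k, pReal P (k + 1) = regVarProfile α L (k + M : ℕ)) (hP0 : 0 < pReal P 0) :
    Tendsto (fun x => x ^ α * (tailF P x : ℝ)) (𝓝[>] 0) (𝓝 L) := by
  refine tendsto_rpow_mul_of_abs_sub_rpow_neg_le (C := M + 1) hα ?_
  have hfM : 0 < regVarProfile α L M := regVarProfile_pos hL (by positivity)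
  filter_upwards [Ioo_mem_nhdsGT (lt_min hP0 hfM)] with x ⟨hx, hxmin⟩
  have hMy : (M : ℝ) < L * x ^ (-α) :=
    (lt_regVarProfile_iff hα hL hx (by positivity)).1 (hxmin.trans_le (min_le_right _ _))
  rw [tailF_eq_ceil_add_one hα hL hM hP hx (hxmin.trans_le (min_le_left _ _))]
  have hceil_lt := Nat.ceil_lt_add_one (sub_nonneg.2 hMy.le)
  have hle_ceil := Nat.le_ceil (L * x ^ (-α) - M)
  have hM1 : (1 : ℝ) ≤ M := by exact_mod_cast hM
  push_cast
  rw [abs_le]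
  constructor <;> linarith

end RegVarTail

lemma exists_seq_tendsto_rpow_mul_tailF {α L : ℝ} (hα0 : 0 < α) (hα1 : α < 1) (hL : 0 < L) :
    ∃ P : ℕ → PMF ℕ, (∀ m, Tendsto (fun x => x ^ α * (tailF (P m) x : ℝ)) (𝓝[>] 0) (𝓝 L)) ∧
      Tendsto (fun m => P m 0) atTop (𝓝 1) ∧ ∀ m, P m 0 < 1 := by
  set g : ℕ → ℕ → ℝ := fun M k => regVarProfile α L (k + M : ℕ)
  have hg0 M k : 0 ≤ g M k := Real.rpow_nonneg (by positivity) _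
  have hg M : Summable (g M) := (summable_nat_add_iff M).2 (summable_regVarProfile hα0 hα1 hL.le)
  have hτ : Tendsto (fun M => ∑' k, g M k) atTop (𝓝 0) :=
    tendsto_sum_nat_add fun k => regVarProfile α L k
  obtain ⟨K, hK⟩ := eventually_atTop.1 (hτ.eventually (eventually_lt_nhds one_pos))
  have hτK m : ∑' k, g (m + K + 1) k < 1 := hK _ (by omega)
  refine ⟨fun m => PMF.ofTail (g (m + K + 1)) (hg0 _) (hg _) (hτK m).le,
    fun m => ?_, ?_, fun m => ?_⟩
  · exact tendsto_rpow_mul_tailF hα0 hL (Nat.succ_pos _) (fun k => pReal_ofTail _ _ _ (k + 1))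
      (by rw [pReal_ofTail]; exact sub_pos.2 (hτK m))
  · have h := ENNReal.tendsto_ofReal ((hτ.comp (tendsto_add_atTop_nat (K + 1))).const_sub 1)
    rw [sub_zero, ENNReal.ofReal_one] at h
    exact h
  · refine ENNReal.ofReal_lt_one.2 (sub_lt_self 1 ((hg _).tsum_pos (hg0 _) 0 ?_))
    exact regVarProfile_pos hL (by positivity)

theorem missingMass_minimax_infeasible_regularly_varying_general
    (α : ℝ) (hα : α ∈ Set.Ioo (0 : ℝ) 1) (L : ℝ) (hL : 0 < L)
    (r n : ℕ) (hr : 1 ≤ r) (hn : 2 ≤ n)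
    (ε : ℝ) (hε : ε ∈ Set.Ioo (0 : ℝ) 1)
    (est : (Fin n → ℕ) → ℝ)
    (h : ℝ → ℝ) :
    ⨆ (P : PMF ℕ)
      (_ : Tendsto (fun x => x ^ α * (tailF P x : ℝ)) (nhdsWithin 0 (Set.Ioi 0)) (nhds L)),
      sampleMeasure P n
        {ω | mloss h (est ω) (missingMass (pReal P) r ω) ≥ ε} = 1 := by
  obtain ⟨P, hPtail, hP0, hP1⟩ := exists_seq_tendsto_rpow_mul_tailF hα.1 hα.2 hL
  exact iSup_sampleMeasure_mloss_ge_eq_one hr (by omega) hε.2.le est h P hPtail hP0 hP1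

/-- Minimax estimation of `θ_r(P;X_n)` is not feasible over the class `Σ(α,L)` of
distributions with regularly varying tails `lim_{x→0} x^α F̄_P(x) = L`: the worst-case
probability of a relative error at least `ε` equals one. -/
theorem missingMass_minimax_infeasible_regularly_varying
    (α : ℝ) (hα : α ∈ Set.Ioo (0 : ℝ) 1) (L : ℝ) (hL : 0 < L)
    (r n : ℕ) (hr : 1 ≤ r) (hn : 2 ≤ n)
    (ε : ℝ) (hε : ε ∈ Set.Ioo (0 : ℝ) 1)
    (est : (Fin n → ℕ) → ℝ) (hest : Measurable est)
    (h : ℝ → ℝ) (hh : Measurable h) :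
    ⨆ (P : PMF ℕ)
      (_ : Tendsto (fun x => x ^ α * (tailF P x : ℝ)) (nhdsWithin 0 (Set.Ioi 0)) (nhds L)),
      sampleMeasure P n
        {ω | mloss h (est ω) (missingMass (pReal P) r ω) ≥ ε} = 1 :=
  missingMass_minimax_infeasible_regularly_varying_general α hα L hL r n hr hn ε hε est h

end
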